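/- Fix real N > 0, ξ ∈ (0,1], σ_e² ≥ 0, k² ≥ 0 and γ > 0, and let μ = Nπ/4, σ² = N(32-π²)/16, Q(x) = (1/√(2π))·∫_x^∞ exp(-t²/2) dt, and for ρ > 0 set z(ρ) = ((ρ(1-ξ²)Nσ_e² + ρk² + 1)/(ρξ²))·γ and P_out(ρ) = 1 - Q((√(z(ρ)) - μ)/σ) - Q((√(z(ρ)) + μ)/σ). Then as ρ → ∞, P_out(ρ) converges to the constant 1 - Q((√(z∞) - μ)/σ) - Q((√(z∞) + μ)/σ), where z∞ = (((1-ξ²)Nσ_e² + k²)/ξ²)·γ; in particular the limiting outage probability is independent of ρ. -/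

import Mathlib

open Real MeasureTheory Set Filter

/-- The Gaussian Q-function `Q(x) = (1/√(2π))·∫_x^∞ exp(-t²/2) dt`. -/
noncomputable def gaussQ (x : ℝ) : ℝ :=
  (1 / Real.sqrt (2 * π)) * ∫ t in Ioi x, Real.exp (-t ^ 2 / 2)

lemma gauss_integrable : Integrable (fun t : ℝ => Real.exp (-t ^ 2 / 2)) := by
  have h := integrable_exp_neg_mul_sq (b := (1 : ℝ) / 2) (by norm_num)
  have he : (fun t : ℝ => Real.exp (-(1 / 2 : ℝ) * t ^ 2)) = fun t => Real.exp (-t ^ 2 / 2) := by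
    funext t; ring_nf
  rwa [he] at h

lemma continuous_gaussQ : Continuous gaussQ := by
  have hint := gauss_integrable
  have key : ∀ x : ℝ, gaussQ x = (1 / Real.sqrt (2 * π)) *
      ((∫ t : ℝ, Real.exp (-t ^ 2 / 2)) - (∫ t in Iic (0:ℝ), Real.exp (-t ^ 2 / 2))
        - ∫ t in (0:ℝ)..x, Real.exp (-t ^ 2 / 2)) := by
    intro x
    have h1 : (∫ t in (0:ℝ)..x, Real.exp (-t ^ 2 / 2)) =
        (∫ t in Iic x, Real.exp (-t ^ 2 / 2)) - ∫ t in Iic (0:ℝ), Real.exp (-t ^ 2 / 2) :=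
      (intervalIntegral.integral_Iic_sub_Iic hint.integrableOn hint.integrableOn).symm
    have h2 : (∫ t in Iic x, Real.exp (-t ^ 2 / 2)) + (∫ t in Ioi x, Real.exp (-t ^ 2 / 2))
        = ∫ t : ℝ, Real.exp (-t ^ 2 / 2) :=
      intervalIntegral.integral_Iic_add_Ioi hint.integrableOn hint.integrableOn
    have h3 : (∫ t in Ioi x, Real.exp (-t ^ 2 / 2)) =
        (∫ t : ℝ, Real.exp (-t ^ 2 / 2)) - ∫ t in Iic x, Real.exp (-t ^ 2 / 2) := by
      linarith
    unfold gaussQ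
    rw [h3, h1]
    ring
  have : Continuous fun x : ℝ => (1 / Real.sqrt (2 * π)) *
      ((∫ t : ℝ, Real.exp (-t ^ 2 / 2)) - (∫ t in Iic (0:ℝ), Real.exp (-t ^ 2 / 2))
        - ∫ t in (0:ℝ)..x, Real.exp (-t ^ 2 / 2)) := by
    apply continuous_const.mul
    apply (continuous_const.sub ?_)
    exact intervalIntegral.continuous_primitive (fun a b => hint.intervalIntegrable) 0
  exact this.congr fun x => (key x).symm

/-- Asymptotic outage probability of the RIS-FD-SSK scheme under imperfect CSI:
with `μ = Nπ/4`, `σ = √(N(32-π²)/16)`, `z(ρ) = ((ρ(1-ξ²)Nσ_e² + ρk² + 1)/(ρξ²))·γ` and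
`P_out(ρ) = 1 - Q((√(z(ρ)) - μ)/σ) - Q((√(z(ρ)) + μ)/σ)`, as `ρ → ∞` the outage
probability tends to the constant obtained by replacing `z(ρ)` with
`z∞ = (((1-ξ²)Nσ_e² + k²)/ξ²)·γ`; in particular the limit is independent of `ρ`. -/
theorem outage_probability_asymptotic (N ξ σe2 k2 γ : ℝ) (hN : 0 < N) (hξ0 : 0 < ξ)
    (hξ1 : ξ ≤ 1) (hσe : 0 ≤ σe2) (hk : 0 ≤ k2) (hγ : 0 < γ) :
    Tendsto
      (fun ρ : ℝ =>
        1 - gaussQ ((Real.sqrt (((ρ * (1 - ξ ^ 2) * N * σe2 + ρ * k2 + 1) / (ρ * ξ ^ 2)) * γ)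
                - N * π / 4) / Real.sqrt (N * (32 - π ^ 2) / 16))
          - gaussQ ((Real.sqrt (((ρ * (1 - ξ ^ 2) * N * σe2 + ρ * k2 + 1) / (ρ * ξ ^ 2)) * γ)
                + N * π / 4) / Real.sqrt (N * (32 - π ^ 2) / 16)))
      atTop
      (nhds
        (1 - gaussQ ((Real.sqrt ((((1 - ξ ^ 2) * N * σe2 + k2) / ξ ^ 2) * γ)
                - N * π / 4) / Real.sqrt (N * (32 - π ^ 2) / 16))
          - gaussQ ((Real.sqrt ((((1 - ξ ^ 2) * N * σe2 + k2) / ξ ^ 2) * γ)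
                + N * π / 4) / Real.sqrt (N * (32 - π ^ 2) / 16)))) := by
  have hξ2 : (ξ : ℝ) ^ 2 ≠ 0 := pow_ne_zero 2 hξ0.ne'
  -- limit of z(ρ)
  have hz : Tendsto (fun ρ : ℝ =>
      ((ρ * (1 - ξ ^ 2) * N * σe2 + ρ * k2 + 1) / (ρ * ξ ^ 2)) * γ) atTop
      (nhds ((((1 - ξ ^ 2) * N * σe2 + k2) / ξ ^ 2) * γ)) := by
    have h0 : Tendsto (fun ρ : ℝ =>
        ((((1 - ξ ^ 2) * N * σe2 + k2) / ξ ^ 2) + (1 / ρ) * (1 / ξ ^ 2)) * γ) atTop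
        (nhds ((((1 - ξ ^ 2) * N * σe2 + k2) / ξ ^ 2) * γ)) := by
      have h1 : Tendsto (fun ρ : ℝ => 1 / ρ) atTop (nhds (0:ℝ)) := by
        simpa [one_div] using (tendsto_inv_atTop_zero : Tendsto (fun ρ : ℝ => ρ⁻¹) atTop (nhds 0))
      have h2 := ((tendsto_const_nhds.add (h1.mul_const (1 / ξ ^ 2))).mul_const γ :
        Tendsto (fun ρ : ℝ =>
          ((((1 - ξ ^ 2) * N * σe2 + k2) / ξ ^ 2) + (1 / ρ) * (1 / ξ ^ 2)) * γ) atTop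
          (nhds (((((1 - ξ ^ 2) * N * σe2 + k2) / ξ ^ 2) + 0 * (1 / ξ ^ 2)) * γ)))
      simpa using h2
    refine h0.congr' ?_
    filter_upwards [eventually_gt_atTop (0 : ℝ)] with ρ hρ
    field_simp
  have hsq := (Real.continuous_sqrt.tendsto _).comp hz
  have hc := continuous_gaussQ
  exact tendsto_const_nhds.sub ((hc.tendsto _).comp
      ((hsq.sub tendsto_const_nhds).div_const _)) |>.sub
    ((hc.tendsto _).comp ((hsq.add tendsto_const_nhds).div_const _))
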